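/- Let R be a ring and M a nonzero right R-module. The family of right ideals of R that are not of the form ann(m) for some nonzero m ∈ M is a right Oka family; consequently, a right ideal maximal among point annihilators of M is completely prime. -/

import Mathlib

/-- The point annihilator `ann(m) = {r : R | m·r = 0}` of an element `m` of a
right `R`-module `M`, as a right ideal of `R`. -/
def pointAnn {R : Type*} [Ring R] {M : Type*} [AddCommGroup M] [Module Rᵐᵒᵖ M]
    (m : M) : Submodule Rᵐᵒᵖ R where
  carrier := {r : R | MulOpposite.op r • m = 0}
  add_mem' {x y} hx hy := by
    simp only [Set.mem_setOf_eq] at *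
    rw [MulOpposite.op_add, add_smul, hx, hy, add_zero]
  zero_mem' := by simp
  smul_mem' c x hx := by
    simp only [Set.mem_setOf_eq] at *
    rw [MulOpposite.smul_eq_mul_unop, MulOpposite.op_mul, MulOpposite.op_unop, mul_smul,
      hx, smul_zero]

/-- A right ideal `P ⊊ R` is completely prime if `aP ⊆ P` and `ab ∈ P` imply
`a ∈ P` or `b ∈ P`. -/
def IsCompletelyPrimeRightIdeal {R : Type*} [Ring R] (P : Submodule Rᵐᵒᵖ R) : Prop :=
  P ≠ ⊤ ∧ ∀ a b : R, (∀ p ∈ P, a * p ∈ P) → a * b ∈ P → a ∈ P ∨ b ∈ P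

/-- For `a ∈ R` and a right ideal `I`, the right ideal `a⁻¹I = {r : R | a * r ∈ I}`. -/
def rdiv {R : Type*} [Ring R] (a : R) (I : Submodule Rᵐᵒᵖ R) : Submodule Rᵐᵒᵖ R where
  carrier := {r : R | a * r ∈ I}
  add_mem' hx hy := by simpa [mul_add] using I.add_mem hx hy
  zero_mem' := by simp
  smul_mem' c x hx := by
    simpa [MulOpposite.smul_eq_mul_unop, ← mul_assoc] using I.smul_mem c hx

/-- An Oka family of right ideals: it contains `R`, and whenever `I + aR` and
`a⁻¹I` belong to the family, so does `I`. -/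
def IsOkaFamily {R : Type*} [Ring R] (F : Set (Submodule Rᵐᵒᵖ R)) : Prop :=
  ⊤ ∈ F ∧ ∀ (I : Submodule Rᵐᵒᵖ R) (a : R),
    I ⊔ Submodule.span Rᵐᵒᵖ {a} ∈ F → rdiv a I ∈ F → I ∈ F

/-!
Oka's prime ideal principle: if `F` is an Oka family and `P` is maximal outside `F`, then
`P + aR` and `a⁻¹P` strictly contain `P` whenever `a, b ∉ P` with `aP ⊆ P` and `ab ∈ P`, so both
lie in `F` and the Oka property would force `P ∈ F`. For point annihilators the Oka property
holds because `ann(m) = ann(m) + aR` when `ma = 0`, while `a⁻¹ ann(m) = ann(ma)` otherwise.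
-/

open MulOpposite

section PointAnn

variable {R : Type*} [Ring R] {M : Type*} [AddCommGroup M] [Module Rᵐᵒᵖ M]

theorem mem_pointAnn {m : M} {r : R} : r ∈ pointAnn m ↔ op r • m = 0 := Iff.rfl

theorem pointAnn_ne_top {m : M} (hm : m ≠ 0) : (pointAnn m : Submodule Rᵐᵒᵖ R) ≠ ⊤ := fun h ↦
  hm <| by simpa using mem_pointAnn.mp (h ▸ Submodule.mem_top : (1 : R) ∈ pointAnn m)

theorem rdiv_pointAnn (a : R) (m : M) : rdiv a (pointAnn m) = pointAnn (op a • m) := by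
  ext r
  change op (a * r) • m = 0 ↔ op r • op a • m = 0
  rw [op_mul, mul_smul]

theorem isOkaFamily_not_pointAnn :
    IsOkaFamily {I : Submodule Rᵐᵒᵖ R | ¬ ∃ m : M, m ≠ 0 ∧ I = pointAnn m} := by
  refine ⟨fun ⟨m, hm, h⟩ ↦ pointAnn_ne_top hm h.symm, ?_⟩
  rintro I a hsup hrdiv ⟨m, hm, rfl⟩
  by_cases hma : op a • m = 0
  · have hle : Submodule.span Rᵐᵒᵖ {a} ≤ pointAnn m :=
      (Submodule.span_singleton_le_iff_mem _ _).mpr hma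
    exact hsup ⟨m, hm, sup_eq_left.mpr hle⟩
  · exact hrdiv ⟨op a • m, hma, rdiv_pointAnn a m⟩

end PointAnn

theorem IsOkaFamily.isCompletelyPrimeRightIdeal_of_maximal {R : Type*} [Ring R]
    {F : Set (Submodule Rᵐᵒᵖ R)} (hF : IsOkaFamily F) {P : Submodule Rᵐᵒᵖ R} (hP : P ∉ F)
    (hmax : ∀ J, J ∉ F → P ≤ J → P = J) : IsCompletelyPrimeRightIdeal P := by
  refine ⟨fun h ↦ hP (h ▸ hF.1), fun a b haP hab ↦ ?_⟩
  by_contra! ⟨ha, hb⟩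
  have hsup : P ⊔ Submodule.span Rᵐᵒᵖ {a} ∈ F := by
    by_contra h
    refine ha ((hmax _ h le_sup_left).symm ▸ ?_)
    exact Submodule.mem_sup_right (Submodule.mem_span_singleton_self a)
  have hrdiv : rdiv a P ∈ F := by
    by_contra h
    exact hb ((hmax _ h haP).symm ▸ hab)
  exact hP (hF.2 P a hsup hrdiv)

theorem pointAnn_oka_and_maximal_completelyPrime_general
    {R : Type*} [Ring R] {M : Type*} [AddCommGroup M] [Module Rᵐᵒᵖ M] :
    IsOkaFamily {I : Submodule Rᵐᵒᵖ R | ¬ ∃ m : M, m ≠ 0 ∧ I = pointAnn m} ∧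
    ∀ P : Submodule Rᵐᵒᵖ R, (∃ m : M, m ≠ 0 ∧ P = pointAnn m) →
      (∀ J : Submodule Rᵐᵒᵖ R, (∃ m : M, m ≠ 0 ∧ J = pointAnn m) → P ≤ J → P = J) →
      IsCompletelyPrimeRightIdeal P :=
  ⟨isOkaFamily_not_pointAnn, fun _ hP hmax ↦
    isOkaFamily_not_pointAnn.isCompletelyPrimeRightIdeal_of_maximal (not_not.mpr hP)
      fun J hJ ↦ hmax J (not_not.mp hJ)⟩

/-- For a nonzero right module `M`, the family of right ideals that are not
point annihilators of `M` is a right Oka family; consequently a right ideal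
maximal among the point annihilators of `M` is completely prime. -/
theorem pointAnn_oka_and_maximal_completelyPrime
    {R : Type*} [Ring R] {M : Type*} [AddCommGroup M] [Module Rᵐᵒᵖ M]
    [Nontrivial M] :
    IsOkaFamily {I : Submodule Rᵐᵒᵖ R | ¬ ∃ m : M, m ≠ 0 ∧ I = pointAnn m} ∧
    ∀ P : Submodule Rᵐᵒᵖ R, (∃ m : M, m ≠ 0 ∧ P = pointAnn m) →
      (∀ J : Submodule Rᵐᵒᵖ R, (∃ m : M, m ≠ 0 ∧ J = pointAnn m) → P ≤ J → P = J) →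
      IsCompletelyPrimeRightIdeal P :=
  pointAnn_oka_and_maximal_completelyPrime_general
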